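/- arXiv:1606.08101 — 4 statements merged into one kernel-verified Lean document; each statement's English description precedes it below -/
import Mathlib

section
/- If a controller $u$ with $q(t)=u(v(t))$ stabilizes the dynamics $v(t+1)=Xu(v(t))+v^{par}$ into the box $[\underline v,\bar v]$ (i.e., $\mathrm{dist}(v(t),[\underline v,\bar v])\to 0$), and $u$ is continuous, then $v^{par}$ lies in the closure of the bounded set $M=\{v - X u(\tilde v) : v,\tilde v \in [\underline v,\bar v]\}$. In particular, the set of $v^{par}$ for which stabilization is possible is bounded. -/
/-!
Let `π` be a nearest-point projection onto the compact box. The projected consecutive pairs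
`(π v(t), π v(t+1))` stay in the compact set `box × box`, so along a subsequence they converge
to some `(a, b)`, and then so do the pairs `(v(t), v(t+1))`. Since
`v(t+1) - X u(v(t)) = v^par` for every `t` and `u` is continuous, passing to the limit gives
`v^par = b - X u(a)`, so `v^par` lies in `M` itself. `M` is compact, being the continuous image
of `box × box`.
-/

open Filter Topology Metric

theorem exists_mem_tendsto_dist_zero_of_tendsto_infDist {E ι : Type*} [PseudoMetricSpace E]
    {S : Set E} (hS : IsCompact S) (hne : S.Nonempty) {l : Filter ι} {x : ι → E}
    (hx : Tendsto (fun i => infDist (x i) S) l (𝓝 0)) :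
    ∃ y : ι → E, (∀ i, y i ∈ S) ∧ Tendsto (fun i => dist (x i) (y i)) l (𝓝 0) := by
  choose y hyS hy using fun i => hS.exists_infDist_eq_dist hne (x i)
  exact ⟨y, hyS, by simpa only [hy] using hx⟩

theorem exists_mem_eq_of_tendsto_infDist {E F : Type*} [PseudoMetricSpace E]
    [TopologicalSpace F] [T2Space F] {S : Set E} (hS : IsCompact S) (hne : S.Nonempty)
    {G : E → E → F} (hG : Continuous (Function.uncurry G)) {x : ℕ → E} {c : F}
    (hxG : ∀ t, G (x t) (x (t + 1)) = c)
    (hx : Tendsto (fun t => infDist (x t) S) atTop (𝓝 0)) :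
    ∃ a ∈ S, ∃ b ∈ S, G a b = c := by
  obtain ⟨y, hyS, hxy⟩ := exists_mem_tendsto_dist_zero_of_tendsto_infDist hS hne hx
  obtain ⟨⟨a, b⟩, ⟨ha, hb⟩, φ, hφ, hyφ⟩ :=
    (hS.prod hS).tendsto_subseq (x := fun t => (y t, y (t + 1))) fun t => ⟨hyS t, hyS (t + 1)⟩
  have hxy_succ : Tendsto (fun t => dist (x (t + 1)) (y (t + 1))) atTop (𝓝 0) :=
    hxy.comp (tendsto_add_atTop_nat 1)
  have hxφ : Tendsto (fun k => (x (φ k), x (φ k + 1))) atTop (𝓝 (a, b)) := by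
    refine (hyφ.fst_nhds.congr_dist ?_).prodMk_nhds (hyφ.snd_nhds.congr_dist ?_)
    · simpa only [Function.comp_def, dist_comm] using hxy.comp hφ.tendsto_atTop
    · simpa only [Function.comp_def, dist_comm] using hxy_succ.comp hφ.tendsto_atTop
  have hlim : Tendsto (fun k => G (x (φ k)) (x (φ k + 1))) atTop (𝓝 (G a b)) :=
    (hG.tendsto (a, b)).comp hxφ
  simp only [hxG] at hlim
  exact ⟨a, ha, b, hb, tendsto_nhds_unique tendsto_const_nhds hlim |>.symm⟩

theorem isCompact_setOf_sub_mulVec {n : ℕ} (X : Matrix (Fin n) (Fin n) ℝ)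
    {u : (Fin n → ℝ) → (Fin n → ℝ)} (hu : Continuous u) {S : Set (Fin n → ℝ)}
    (hS : IsCompact S) :
    IsCompact {w : Fin n → ℝ | ∃ p ∈ S, ∃ q ∈ S, w = p - X.mulVec (u q)} := by
  have hM : {w : Fin n → ℝ | ∃ p ∈ S, ∃ q ∈ S, w = p - X.mulVec (u q)} =
      (fun pq : (Fin n → ℝ) × (Fin n → ℝ) => pq.1 - X.mulVec (u pq.2)) '' S ×ˢ S := by
    ext w
    simp only [Set.mem_image, Set.mem_prod, Prod.exists]
    grind
  rw [hM]
  exact (hS.prod hS).image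
    (continuous_fst.sub (continuous_const.matrix_mulVec (hu.comp continuous_snd)))

/-- If a continuous controller `q(t) = u(v(t))` stabilizes `v(t+1) = X u(v(t)) + v^par`
into the box `[v̲, v̄]`, then `v^par` lies in the closure of the bounded set
`M = {v - X u(ṽ) : v, ṽ ∈ [v̲, v̄]}`; in particular `M` is bounded. -/
theorem stmt_3 (n : ℕ) (X : Matrix (Fin n) (Fin n) ℝ)
    (vlo vhi : Fin n → ℝ) (hle : vlo ≤ vhi)
    (u : (Fin n → ℝ) → (Fin n → ℝ)) (hu : Continuous u)
    (vpar : Fin n → ℝ) (v : ℕ → (Fin n → ℝ))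
    (hdyn : ∀ t, v (t + 1) = X.mulVec (u (v t)) + vpar)
    (hstab : Filter.Tendsto (fun t => Metric.infDist (v t) (Set.Icc vlo vhi))
      Filter.atTop (nhds 0)) :
    vpar ∈ closure {w : Fin n → ℝ |
        ∃ p ∈ Set.Icc vlo vhi, ∃ q ∈ Set.Icc vlo vhi, w = p - X.mulVec (u q)} ∧
      Bornology.IsBounded {w : Fin n → ℝ |
        ∃ p ∈ Set.Icc vlo vhi, ∃ q ∈ Set.Icc vlo vhi, w = p - X.mulVec (u q)} := by
  have hM := isCompact_setOf_sub_mulVec X hu (isCompact_Icc (a := vlo) (b := vhi))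
  refine ⟨subset_closure ?_, hM.isBounded⟩
  obtain ⟨a, ha, b, hb, hab⟩ := exists_mem_eq_of_tendsto_infDist
    (G := fun p q => q - X.mulVec (u p)) (c := vpar) isCompact_Icc (Set.nonempty_Icc.2 hle)
    (continuous_snd.sub (continuous_const.matrix_mulVec (hu.comp continuous_fst)))
    (fun t => by simp only [hdyn t, add_sub_cancel_left]) hstab
  exact ⟨b, hb, a, ha, hab.symm⟩
end

section
/- Consider Algorithm 1: at each update, $\alpha_i(t) = q_i(t)-q_i(t-1) = -\epsilon d_i(v_i(t'))$ for some time $t'$ (or $\alpha_i(t)=0$ if no update), and $\gamma_i(t) = \hat{d}_i(v_i(t'))$. Then $\gamma(t)^T \alpha(t) = -\frac{1}{\epsilon}\|\alpha(t)\|^2 - \sum_{i=1}^n M_i |\alpha_i(t)|$, where $M_i = \frac{\bar{v}_i - \underline{v}_i}{2}$. -/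
/-!
Write `d` for the dead-band function and `M = (v̄ - v̲)/2`. Outside the band `[v̲, v̄]` the
centred deviation `d̂(w) = w - (v̄ + v̲)/2` differs from `d(w)` by exactly `M` in the
direction of `d(w)`, and inside it `d(w) = 0`; hence `d̂ d = d² + M |d|` everywhere.
Multiplying by `-ε` gives the identity coordinatewise, and summing gives the theorem.
-/

open scoped Matrix

namespace DeadBand

/-- The paper's `dᵢ`, with `lo = v̲ᵢ` and `hi = v̄ᵢ`. -/
def dev (lo hi w : ℝ) : ℝ := max (w - hi) 0 - max (lo - w) 0

variable {lo hi : ℝ}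

theorem dev_of_le_lo (hlh : lo ≤ hi) {w : ℝ} (hw : w ≤ lo) : dev lo hi w = w - lo := by
  simp only [dev, max_eq_right (by linarith : w - hi ≤ 0), max_eq_left (by linarith : 0 ≤ lo - w)]
  ring

theorem dev_of_mem_Icc {w : ℝ} (hw : w ∈ Set.Icc lo hi) : dev lo hi w = 0 := by
  simp [dev, hw.1, hw.2]

theorem dev_of_hi_le (hlh : lo ≤ hi) {w : ℝ} (hw : hi ≤ w) : dev lo hi w = w - hi := by
  simp only [dev, max_eq_left (by linarith : 0 ≤ w - hi), max_eq_right (by linarith : lo - w ≤ 0)]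
  ring

theorem sub_midpoint_mul_dev (hlh : lo ≤ hi) (w : ℝ) :
    (w - (hi + lo) / 2) * dev lo hi w = dev lo hi w ^ 2 + (hi - lo) / 2 * |dev lo hi w| := by
  rcases le_total w lo with hw | hw
  · rw [dev_of_le_lo hlh hw, abs_of_nonpos (by linarith)]
    ring
  rcases le_total w hi with hw' | hw'
  · simp [dev_of_mem_Icc ⟨hw, hw'⟩]
  · rw [dev_of_hi_le hlh hw', abs_of_nonneg (by linarith)]
    ring

theorem sub_midpoint_mul_neg_mul_dev (hlh : lo ≤ hi) {ε : ℝ} (hε : 0 < ε) (w : ℝ) :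
    (w - (hi + lo) / 2) * (-ε * dev lo hi w) =
      -(1 / ε) * (-ε * dev lo hi w) ^ 2 - (hi - lo) / 2 * |-ε * dev lo hi w| := by
  have hsq : 1 / ε * (-ε * dev lo hi w) ^ 2 = ε * dev lo hi w ^ 2 := by
    field_simp
  rw [neg_mul (1 / ε), hsq, abs_mul, abs_neg, abs_of_pos hε]
  linear_combination (-ε) * sub_midpoint_mul_dev hlh w

end DeadBand

open DeadBand in
/-- Lemma 3 of the paper: if for each bus `i` either `α_i = -ε d_i(w_i)` and
`γ_i = d̂_i(w_i)` for some voltage `w_i` (update), or `α_i = 0` (no update), then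
`γᵀα = -(1/ε)‖α‖² - ∑ᵢ Mᵢ |αᵢ|` with `Mᵢ = (v̄ᵢ - v̲ᵢ)/2`. -/
theorem stmt_6 (n : ℕ) (vlo vhi : Fin n → ℝ) (hle : vlo ≤ vhi)
    (ε : ℝ) (hε : 0 < ε) (α γ : Fin n → ℝ)
    (h : ∀ i, (∃ w : ℝ,
        α i = -ε * (max (w - vhi i) 0 - max (vlo i - w) 0) ∧
        γ i = w - (vhi i + vlo i) / 2) ∨ α i = 0) :
    γ ⬝ᵥ α = -(1 / ε) * ∑ i, (α i) ^ 2 - ∑ i, (vhi i - vlo i) / 2 * |α i| := by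
  have hcoord : ∀ i, γ i * α i = -(1 / ε) * α i ^ 2 - (vhi i - vlo i) / 2 * |α i| := by
    intro i
    rcases h i with ⟨w, hα, hγ⟩ | hα
    · rw [hα, hγ]
      exact sub_midpoint_mul_neg_mul_dev (hle i) hε w
    · simp [hα]
  rw [dotProduct, Finset.sum_congr rfl fun i _ => hcoord i, Finset.sum_sub_distrib, Finset.mul_sum]
end

section
/- Let $D : \mathbb{R}^m \to \mathbb{R}$ be concave quadratic with constant Hessian $\nabla^2 D = -A$, $A$ symmetric PSD with $\sigma_{\max}(A) \le 2\sigma$. Suppose a sequence $\lambda(t)$ with increments $\pi(t)$ satisfies for each $t$: $\mu(t)^T\pi(t) \ge \frac{1}{\epsilon}\|\pi(t)\|^2$ and $\|\nabla D(\lambda(t-1)) - \mu(t)\| \le 2K \sum_{t'=t-T}^{t-1}\|\pi(t')\|$ for constants $K, T \ge 0$. If $D$ is bounded above and $\epsilon < \frac{1}{\sigma + 2KT}$, then $\sum_{t=1}^{\infty}\|\pi(t)\|^2 < \infty$ and $\pi(t) \to 0$. -/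
/-!
The quadratic model of `D` with `xᵀAx ≤ 2σ‖x‖²` and the projection inequality give
`D(λ(t)) - D(λ(t-1)) ≥ (1/ε - σ)‖π(t)‖² - ‖∇D(λ(t-1)) - μ(t)‖ ‖π(t)‖`. By AM-GM the
delayed-gradient error term is at most `K (∑_{window} ‖π(t')‖² + T ‖π(t)‖²)`. Every increment
lies in at most `T` windows, so summing over `t` the values of `D` telescope and
`(1/ε - σ - 2KT) ∑_{t ≤ N} ‖π(t)‖²` stays bounded by `sup D - D(λ(0))` plus a constant.
-/

noncomputable def enorm16 {m : ℕ} (x : Fin m → ℝ) : ℝ := Real.sqrt (∑ i, x i ^ 2)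

open Finset Filter Topology

lemma enorm16_eq_norm_toLp {m : ℕ} (x : Fin m → ℝ) :
    enorm16 x = ‖(WithLp.toLp 2 x : EuclideanSpace ℝ (Fin m))‖ := by
  simp [enorm16, EuclideanSpace.norm_eq]

lemma enorm16_nonneg {m : ℕ} (x : Fin m → ℝ) : 0 ≤ enorm16 x := Real.sqrt_nonneg _

lemma dotProduct_self_eq_enorm16_sq {m : ℕ} (x : Fin m → ℝ) : x ⬝ᵥ x = enorm16 x ^ 2 := by
  rw [enorm16_eq_norm_toLp, ← real_inner_self_eq_norm_sq, EuclideanSpace.inner_toLp_toLp]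
  simp

lemma abs_dotProduct_le_enorm16 {m : ℕ} (x y : Fin m → ℝ) :
    |x ⬝ᵥ y| ≤ enorm16 x * enorm16 y := by
  simpa [enorm16_eq_norm_toLp, EuclideanSpace.inner_toLp_toLp, dotProduct_comm, mul_comm]
    using abs_real_inner_le_norm (WithLp.toLp 2 y : EuclideanSpace ℝ (Fin m)) (WithLp.toLp 2 x)

lemma tendsto_zero_of_tendsto_enorm16 {m : ℕ} {α : Type*} {l : Filter α} {f : α → Fin m → ℝ}
    (hf : Tendsto (fun a => enorm16 (f a)) l (𝓝 0)) : Tendsto f l (𝓝 0) := by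
  simp only [enorm16_eq_norm_toLp] at hf
  have := (PiLp.continuous_ofLp 2 (fun _ : Fin m => ℝ)).tendsto 0 |>.comp
    (tendsto_zero_iff_norm_tendsto_zero.mpr hf)
  simpa [Function.comp_def] using this

lemma two_mul_sum_mul_le_sum_sq_add {ι : Type*} {s : Finset ι} {T : ℕ} (hs : #s ≤ T)
    (x : ι → ℝ) (p : ℝ) : 2 * (∑ i ∈ s, x i) * p ≤ ∑ i ∈ s, x i ^ 2 + T * p ^ 2 :=
  calc 2 * (∑ i ∈ s, x i) * p = ∑ i ∈ s, 2 * x i * p := by rw [mul_sum, sum_mul]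
    _ ≤ ∑ i ∈ s, (x i ^ 2 + p ^ 2) := sum_le_sum fun i _ => two_mul_le_add_sq _ _
    _ = ∑ i ∈ s, x i ^ 2 + #s * p ^ 2 := by rw [sum_add_distrib, sum_const, nsmul_eq_mul]
    _ ≤ ∑ i ∈ s, x i ^ 2 + T * p ^ 2 := by gcongr

lemma card_Icc_add_one_sub_le (t T : ℕ) : #(Icc (t + 1 - T) t) ≤ T := by
  rw [Nat.card_Icc]; omega

lemma sum_range_sum_window_le {a : ℕ → ℝ} (ha : ∀ t, 0 ≤ a t) (T N : ℕ) :
    ∑ t ∈ range N, ∑ t' ∈ Icc (t + 1 - T) t, a t' ≤ T * ∑ t ∈ range N, a t := by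
  -- each `t'` lies in the windows `[t + 1 - T, t]` of at most `T` indices `t`
  rw [sum_comm' (t' := range N) (s' := fun t' => range N ∩ Ico t' (t' + T)) (fun t t' => by
    simp only [mem_range, mem_Icc, mem_inter, mem_Ico]; omega), mul_sum]
  refine sum_le_sum fun t' _ => ?_
  rw [sum_const, nsmul_eq_mul]
  gcongr
  · exact ha t'
  · calc #(range N ∩ Ico t' (t' + T)) ≤ #(Ico t' (t' + T)) := card_le_card inter_subset_right
      _ = T := by simp

lemma summable_of_le_sub_add_window {a u : ℕ → ℝ} {c K : ℝ} {T : ℕ}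
    (ha : ∀ t, 0 ≤ a t) (hu : ∃ B, ∀ t, u t ≤ B) (hK : 0 ≤ K) (hc : K * T < c)
    (h : ∀ t, c * a (t + 1) ≤ u (t + 1) - u t + K * ∑ t' ∈ Icc (t + 1 - T) t, a t') :
    Summable a := by
  obtain ⟨B, hB⟩ := hu
  refine (summable_nat_add_iff 1).mp <|
    summable_of_sum_range_le (c := (B - u 0 + K * T * a 0) / (c - K * T))
      (fun t => ha (t + 1)) fun N => ?_
  rw [le_div_iff₀ (by linarith)]
  have hsum : c * ∑ t ∈ range N, a (t + 1) ≤
      u N - u 0 + K * ∑ t ∈ range N, ∑ t' ∈ Icc (t + 1 - T) t, a t' := by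
    simpa only [sum_add_distrib, sum_range_sub u, ← mul_sum] using
      sum_le_sum fun t (_ : t ∈ range N) => h t
  have hshift : ∑ t ∈ range N, a t ≤ ∑ t ∈ range N, a (t + 1) + a 0 := by
    rw [← sum_range_succ' a N, sum_range_succ]
    linarith [ha N]
  have hwindow := mul_le_mul_of_nonneg_left
    ((sum_range_sum_window_le ha T N).trans (mul_le_mul_of_nonneg_left hshift T.cast_nonneg)) hK
  nlinarith [hB N]

lemma quadratic_increment_ge {m : ℕ} {A : Matrix (Fin m) (Fin m) ℝ} {σ ε : ℝ}
    {D : (Fin m → ℝ) → ℝ} {g : (Fin m → ℝ) → (Fin m → ℝ)}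
    (hAbound : ∀ x : Fin m → ℝ, x ⬝ᵥ A.mulVec x ≤ 2 * σ * (x ⬝ᵥ x))
    (hD : ∀ x y : Fin m → ℝ,
      D y = D x + g x ⬝ᵥ (y - x) - (1 / 2) * ((y - x) ⬝ᵥ A.mulVec (y - x)))
    {x y μ : Fin m → ℝ} (hproj : μ ⬝ᵥ (y - x) ≥ (1 / ε) * enorm16 (y - x) ^ 2) :
    (1 / ε - σ) * enorm16 (y - x) ^ 2 - enorm16 (g x - μ) * enorm16 (y - x) ≤ D y - D x := by
  have hsplit : g x ⬝ᵥ (y - x) = μ ⬝ᵥ (y - x) + (g x - μ) ⬝ᵥ (y - x) := by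
    rw [sub_dotProduct]; ring
  have hcs := (abs_le.mp (abs_dotProduct_le_enorm16 (g x - μ) (y - x))).1
  have hA := hAbound (y - x)
  rw [dotProduct_self_eq_enorm16_sq] at hA
  linarith [hD x y]

theorem stmt_16_general (m : ℕ) (A : Matrix (Fin m) (Fin m) ℝ)
    (σ K : ℝ) (T : ℕ) (hK : 0 ≤ K)
    (hAbound : ∀ x : Fin m → ℝ, x ⬝ᵥ A.mulVec x ≤ 2 * σ * (x ⬝ᵥ x))
    (D : (Fin m → ℝ) → ℝ) (g : (Fin m → ℝ) → (Fin m → ℝ))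
    (hD : ∀ x y : Fin m → ℝ,
      D y = D x + g x ⬝ᵥ (y - x) - (1 / 2) * ((y - x) ⬝ᵥ A.mulVec (y - x)))
    (hDbdd : ∃ B : ℝ, ∀ x, D x ≤ B)
    (lam π μ : ℕ → Fin m → ℝ)
    (hπ : ∀ t, π (t + 1) = lam (t + 1) - lam t)
    (ε : ℝ) (hε : 0 < ε) (hεsmall : ε < 1 / (σ + 2 * K * T))
    (hproj : ∀ t : ℕ, 1 ≤ t → μ t ⬝ᵥ π t ≥ (1 / ε) * enorm16 (π t) ^ 2)
    (herr : ∀ t : ℕ, 1 ≤ t →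
      enorm16 (g (lam (t - 1)) - μ t) ≤ 2 * K * ∑ t' ∈ Finset.Icc (t - T) (t - 1), enorm16 (π t')) :
    Summable (fun t => enorm16 (π t) ^ 2) ∧
      Filter.Tendsto π Filter.atTop (nhds 0) := by
  have hstep : ∀ t, (1 / ε - σ - K * T) * enorm16 (π (t + 1)) ^ 2 ≤ D (lam (t + 1)) - D (lam t)
      + K * ∑ t' ∈ Icc (t + 1 - T) t, enorm16 (π t') ^ 2 := by
    intro t
    have hincr := quadratic_increment_ge hAbound hD (hπ t ▸ hproj (t + 1) t.succ_pos)
    have herr' : enorm16 (g (lam t) - μ (t + 1)) ≤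
        2 * K * ∑ t' ∈ Icc (t + 1 - T) t, enorm16 (π t') := by
      simpa using herr (t + 1) t.succ_pos
    have hamgm := mul_le_mul_of_nonneg_left (two_mul_sum_mul_le_sum_sq_add
      (card_Icc_add_one_sub_le t T) (fun t' => enorm16 (π t')) (enorm16 (π (t + 1)))) hK
    rw [← hπ t] at hincr
    nlinarith [mul_le_mul_of_nonneg_right herr' (enorm16_nonneg (π (t + 1)))]
  have hpos : 0 < σ + 2 * K * T := by
    by_contra! h
    linarith [one_div_nonpos.mpr h]
  have hsum : Summable (fun t => enorm16 (π t) ^ 2) :=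
    summable_of_le_sub_add_window (fun t => sq_nonneg _) (hDbdd.imp fun B hB t => hB (lam t)) hK
      (by rw [lt_one_div hε hpos] at hεsmall; linarith) hstep
  refine ⟨hsum, tendsto_zero_of_tendsto_enorm16 ?_⟩
  simpa [Real.sqrt_sq (enorm16_nonneg _)] using hsum.tendsto_atTop_zero.sqrt

/-- Abstract version of Lemma 7: `D` is concave quadratic with constant Hessian `-A`
(`A` symmetric PSD with `σ_max(A) ≤ 2σ`, expressed via its quadratic form) and
gradient `g`. If the increments `π(t) = λ(t) - λ(t-1)` satisfy the projection
inequality `μ(t)ᵀπ(t) ≥ (1/ε)‖π(t)‖²` and the delayed-gradient error bound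
`‖∇D(λ(t-1)) - μ(t)‖ ≤ 2K ∑_{t'=t-T}^{t-1} ‖π(t')‖`, `D` is bounded above, and
`ε < 1/(σ + 2KT)`, then `∑ ‖π(t)‖² < ∞` and `π(t) → 0`. -/
theorem stmt_16 (m : ℕ) (A : Matrix (Fin m) (Fin m) ℝ) (hAsym : A.IsHermitian)
    (σ K : ℝ) (T : ℕ) (hσ : 0 ≤ σ) (hK : 0 ≤ K)
    (hApsd : ∀ x : Fin m → ℝ, 0 ≤ x ⬝ᵥ A.mulVec x)
    (hAbound : ∀ x : Fin m → ℝ, x ⬝ᵥ A.mulVec x ≤ 2 * σ * (x ⬝ᵥ x))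
    (D : (Fin m → ℝ) → ℝ) (g : (Fin m → ℝ) → (Fin m → ℝ))
    (hD : ∀ x y : Fin m → ℝ,
      D y = D x + g x ⬝ᵥ (y - x) - (1 / 2) * ((y - x) ⬝ᵥ A.mulVec (y - x)))
    (hDbdd : ∃ B : ℝ, ∀ x, D x ≤ B)
    (lam π μ : ℕ → Fin m → ℝ)
    (hπ : ∀ t, π (t + 1) = lam (t + 1) - lam t) (hπ0 : π 0 = 0)
    (ε : ℝ) (hε : 0 < ε) (hεsmall : ε < 1 / (σ + 2 * K * T))
    (hproj : ∀ t : ℕ, 1 ≤ t → μ t ⬝ᵥ π t ≥ (1 / ε) * enorm16 (π t) ^ 2)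
    (herr : ∀ t : ℕ, 1 ≤ t →
      enorm16 (g (lam (t - 1)) - μ t) ≤ 2 * K * ∑ t' ∈ Finset.Icc (t - T) (t - 1), enorm16 (π t')) :
    Summable (fun t => enorm16 (π t) ^ 2) ∧
      Filter.Tendsto π Filter.atTop (nhds 0) :=
  stmt_16_general m A σ K T hK hAbound D g hD hDbdd lam π μ hπ ε hε hεsmall hproj herr
end

section
/- Let $X$ be symmetric positive definite and consider the dual function $D(\bar\lambda,\underline\lambda) = -\frac{1}{2}(\underline{\lambda}-\bar{\lambda})^T X (\underline{\lambda}-\bar{\lambda}) + \bar{\lambda}^T(v^{par}-\bar{v}) + \underline{\lambda}^T(\underline{v}-v^{par})$ with $\underline{v} < \bar{v}$ componentwise. Then the maximizer of $D$ over $\bar\lambda, \underline\lambda \ge 0$ is unique: if $(\bar\lambda', \underline\lambda')$ maximizes $D$, then for each $i$ at least one of $\bar\lambda'_i, \underline\lambda'_i$ is zero, and $\underline\lambda' - \bar\lambda'$ is uniquely determined, hence $(\bar\lambda', \underline\lambda')$ is uniquely determined. -/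
/-! Lowering both `λ̄ᵢ` and `λ̲ᵢ` by their minimum keeps `λ̲ - λ̄` and raises `D` by
`min (λ̄ᵢ, λ̲ᵢ) (v̄ᵢ - v̲ᵢ)`, so every maximizer is complementary, and a complementary pair is
recovered from its difference as `λ̄ = (λ̲ - λ̄)⁻`, `λ̲ = (λ̲ - λ̄)⁺`. The difference is unique
because the quadratic part of `D` is a positive definite form in `λ̲ - λ̄`: at the midpoint of
two maximizers with differences `a`, `b`, `D` exceeds their common maximal value by
`⅛ (a - b)ᵀ X (a - b)`. -/

open scoped Matrix

section DualObjective

variable {ι : Type*} [Fintype ι] (X : Matrix ι ι ℝ) (vpar vlo vhi : ι → ℝ)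

noncomputable def dualObjective (lamU lamL : ι → ℝ) : ℝ :=
  -(1 / 2) * ((lamL - lamU) ⬝ᵥ X *ᵥ (lamL - lamU)) +
    lamU ⬝ᵥ (vpar - vhi) + lamL ⬝ᵥ (vlo - vpar)

theorem dualObjective_sub_sub (lamU lamL e : ι → ℝ) :
    dualObjective X vpar vlo vhi (lamU - e) (lamL - e) =
      dualObjective X vpar vlo vhi lamU lamL + e ⬝ᵥ (vhi - vlo) := by
  simp only [dualObjective, sub_sub_sub_cancel_right, sub_dotProduct, dotProduct_sub]
  ring

theorem dualObjective_midpoint (pU pL qU qL : ι → ℝ) :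
    dualObjective X vpar vlo vhi ((1 / 2 : ℝ) • (pU + qU)) ((1 / 2 : ℝ) • (pL + qL)) =
      (dualObjective X vpar vlo vhi pU pL + dualObjective X vpar vlo vhi qU qL) / 2 +
        (1 / 8) * ((pL - pU - (qL - qU)) ⬝ᵥ X *ᵥ (pL - pU - (qL - qU))) := by
  simp only [dualObjective, ← smul_sub, Matrix.mulVec_smul, Matrix.mulVec_add, Matrix.mulVec_sub,
    smul_dotProduct, dotProduct_smul, add_dotProduct, dotProduct_add, sub_dotProduct,
    dotProduct_sub, smul_eq_mul]
  ring

variable {X vpar vlo vhi}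

theorem dualObjective_maximizer_complementary [DecidableEq ι] (hlt : ∀ i, vlo i < vhi i)
    {U L : ι → ℝ} (hU : 0 ≤ U) (hL : 0 ≤ L)
    (hmax : ∀ lamU lamL : ι → ℝ, 0 ≤ lamU → 0 ≤ lamL →
      dualObjective X vpar vlo vhi lamU lamL ≤ dualObjective X vpar vlo vhi U L)
    (i : ι) : U i = 0 ∨ L i = 0 := by
  by_contra! h
  set t := min (U i) (L i)
  have ht : 0 < t := lt_min ((hU i).lt_of_ne' h.1) ((hL i).lt_of_ne' h.2)
  have hsub {W : ι → ℝ} (hW : 0 ≤ W) (htW : t ≤ W i) : 0 ≤ W - Pi.single i t := by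
    intro j
    rcases eq_or_ne j i with rfl | hj
    · simpa using htW
    · simpa [hj] using hW j
  have hgain := hmax _ _ (hsub hU (min_le_left _ _)) (hsub hL (min_le_right _ _))
  rw [dualObjective_sub_sub, single_dotProduct, Pi.sub_apply] at hgain
  nlinarith [hlt i]

theorem dualObjective_maximizer_sub_eq (hX : X.PosDef)
    {pU pL qU qL : ι → ℝ} (hpU : 0 ≤ pU) (hpL : 0 ≤ pL) (hqU : 0 ≤ qU) (hqL : 0 ≤ qL)
    (hpmax : ∀ lamU lamL : ι → ℝ, 0 ≤ lamU → 0 ≤ lamL →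
      dualObjective X vpar vlo vhi lamU lamL ≤ dualObjective X vpar vlo vhi pU pL)
    (hqmax : ∀ lamU lamL : ι → ℝ, 0 ≤ lamU → 0 ≤ lamL →
      dualObjective X vpar vlo vhi lamU lamL ≤ dualObjective X vpar vlo vhi qU qL) :
    pL - pU = qL - qU := by
  have hhalf : (0 : ℝ) ≤ 1 / 2 := by norm_num
  have hmid := hpmax _ _ (smul_nonneg hhalf (add_nonneg hpU hqU))
    (smul_nonneg hhalf (add_nonneg hpL hqL))
  have hpq := le_antisymm (hqmax pU pL hpU hpL) (hpmax qU qL hqU hqL)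
  rw [dualObjective_midpoint, hpq] at hmid
  by_contra hne
  have := hX.dotProduct_mulVec_pos (sub_ne_zero.mpr hne)
  simp only [star_trivial] at this
  linarith

end DualObjective

theorem eq_negPart_and_eq_posPart_of_complementary {ι : Type*} {U L : ι → ℝ}
    (hU : 0 ≤ U) (hL : 0 ≤ L) (hc : ∀ i, U i = 0 ∨ L i = 0) :
    U = (L - U)⁻ ∧ L = (L - U)⁺ := by
  have hUi (i : ι) : 0 ≤ U i := hU i
  have hLi (i : ι) : 0 ≤ L i := hL i
  constructor <;> funext i <;> rcases hc i with h | h <;> simp [h, hUi, hLi]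

theorem stmt_17_general (n : ℕ) (X : Matrix (Fin n) (Fin n) ℝ)
    (hXpd : X.PosDef)
    (vpar vlo vhi : Fin n → ℝ) (hlt : ∀ i, vlo i < vhi i)
    (D : (Fin n → ℝ) → (Fin n → ℝ) → ℝ)
    (hD : ∀ lamU lamL : Fin n → ℝ, D lamU lamL =
      -(1 / 2) * ((lamL - lamU) ⬝ᵥ X.mulVec (lamL - lamU)) +
        lamU ⬝ᵥ (vpar - vhi) + lamL ⬝ᵥ (vlo - vpar))
    (pU pL qU qL : Fin n → ℝ)
    (hpU : 0 ≤ pU) (hpL : 0 ≤ pL) (hqU : 0 ≤ qU) (hqL : 0 ≤ qL)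
    (hpmax : ∀ lamU lamL : Fin n → ℝ, 0 ≤ lamU → 0 ≤ lamL → D lamU lamL ≤ D pU pL)
    (hqmax : ∀ lamU lamL : Fin n → ℝ, 0 ≤ lamU → 0 ≤ lamL → D lamU lamL ≤ D qU qL) :
    (∀ i, pU i = 0 ∨ pL i = 0) ∧ pL - pU = qL - qU ∧ pU = qU ∧ pL = qL := by
  obtain rfl : D = dualObjective X vpar vlo vhi := funext₂ hD
  have hcompP := dualObjective_maximizer_complementary hlt hpU hpL hpmax
  have hcompQ := dualObjective_maximizer_complementary hlt hqU hqL hqmax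
  have hsub := dualObjective_maximizer_sub_eq hXpd hpU hpL hqU hqL hpmax hqmax
  obtain ⟨hpU', hpL'⟩ := eq_negPart_and_eq_posPart_of_complementary hpU hpL hcompP
  obtain ⟨hqU', hqL'⟩ := eq_negPart_and_eq_posPart_of_complementary hqU hqL hcompQ
  refine ⟨hcompP, hsub, ?_, ?_⟩
  · rw [hpU', hqU', hsub]
  · rw [hpL', hqL', hsub]

/-- Uniqueness of the dual maximizer (Theorem 3's dual step): with `X` symmetric
positive definite, `v̲ < v̄`, a feasible primal problem, and the dual function
`D(λ̄,λ̲) = -½(λ̲-λ̄)ᵀX(λ̲-λ̄) + λ̄ᵀ(v^par-v̄) + λ̲ᵀ(v̲-v^par)`, any maximizer over the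
nonnegative orthant has, for each `i`, at least one of `λ̄ᵢ, λ̲ᵢ` zero; the difference
`λ̲-λ̄` is the same for all maximizers, and the maximizer itself is unique. -/
theorem stmt_17 (n : ℕ) (X : Matrix (Fin n) (Fin n) ℝ)
    (hXsym : X.IsHermitian) (hXpd : X.PosDef)
    (vpar vlo vhi : Fin n → ℝ) (hlt : ∀ i, vlo i < vhi i)
    (hfeas : ∃ q : Fin n → ℝ, vlo ≤ X.mulVec q + vpar ∧ X.mulVec q + vpar ≤ vhi)
    (D : (Fin n → ℝ) → (Fin n → ℝ) → ℝ)
    (hD : ∀ lamU lamL : Fin n → ℝ, D lamU lamL =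
      -(1 / 2) * ((lamL - lamU) ⬝ᵥ X.mulVec (lamL - lamU)) +
        lamU ⬝ᵥ (vpar - vhi) + lamL ⬝ᵥ (vlo - vpar))
    (pU pL qU qL : Fin n → ℝ)
    (hpU : 0 ≤ pU) (hpL : 0 ≤ pL) (hqU : 0 ≤ qU) (hqL : 0 ≤ qL)
    (hpmax : ∀ lamU lamL : Fin n → ℝ, 0 ≤ lamU → 0 ≤ lamL → D lamU lamL ≤ D pU pL)
    (hqmax : ∀ lamU lamL : Fin n → ℝ, 0 ≤ lamU → 0 ≤ lamL → D lamU lamL ≤ D qU qL) :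
    (∀ i, pU i = 0 ∨ pL i = 0) ∧ pL - pU = qL - qU ∧ pU = qU ∧ pL = qL :=
  stmt_17_general n X hXpd vpar vlo vhi hlt D hD pU pL qU qL hpU hpL hqU hqL hpmax hqmax
end
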